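/- Let λ, μ ∈ Λ_Δ(n,r), let y, d ∈ D^Δ_{λ,μ} with y ≤ d in the Bruhat order, and set B = J_Δ(λ,y,μ) and A = J_Δ(λ,d,μ). Then B ⊑ A; that is, σ_{i,j}(B) ≤ σ_{i,j}(A) for all i ≠ j, ro(B) = ro(A) and co(B) = co(A). -/

import Mathlib

open scoped Classical

noncomputable section

/-- The extended affine symmetric group `𝔖_{Δ,r}`: permutations `w` of `ℤ`
with `w (i + r) = w i + r` for all `i`. -/
def AffSym (r : ℕ) : Subgroup (Equiv.Perm ℤ) where
  carrier := {w | ∀ i : ℤ, w (i + r) = w i + r}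
  one_mem' := fun _ => rfl
  mul_mem' := by
    intro a b ha hb i
    simp only [Equiv.Perm.mul_apply, hb i, ha (b i)]
  inv_mem' := by
    intro a ha i
    apply a.injective
    rw [ha (a⁻¹ i)]
    simp

/-- The underlying function of the affine transposition `(i,j)`. -/
def tFun (r : ℕ) (i j : ℤ) : ℤ → ℤ := fun k =>
  if (r : ℤ) ∣ (k - i) then j + (k - i)
  else if (r : ℤ) ∣ (k - j) then i + (k - j)
  else k

theorem tFun_invol (r : ℕ) (i j : ℤ) (h : ¬ (r : ℤ) ∣ (j - i)) :
    Function.Involutive (tFun r i j) := by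
  intro k
  by_cases h1 : (r : ℤ) ∣ (k - i)
  · have e1 : tFun r i j k = j + (k - i) := by simp only [tFun]; rw [if_pos h1]
    have h2 : ¬ (r : ℤ) ∣ (j + (k - i) - i) := by
      intro hd
      apply h
      have h5 := hd.sub h1
      have h6 : j + (k - i) - i - (k - i) = j - i := by ring
      rwa [h6] at h5
    have h3 : (r : ℤ) ∣ (j + (k - i) - j) := by simpa using h1
    rw [e1]; simp only [tFun]; rw [if_neg h2, if_pos h3]; ring
  · by_cases h2 : (r : ℤ) ∣ (k - j)
    · have e1 : tFun r i j k = i + (k - j) := by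
        simp only [tFun]; rw [if_neg h1, if_pos h2]
      have h3 : (r : ℤ) ∣ (i + (k - j) - i) := by simpa using h2
      rw [e1]; simp only [tFun]; rw [if_pos h3]; ring
    · have e1 : tFun r i j k = k := by simp only [tFun]; rw [if_neg h1, if_neg h2]
      rw [e1, e1]

/-- The affine transposition `(i,j) ∈ W_r` (defined to be `1` in the degenerate
case `i ≡ j (mod r)`). -/
def tPerm (r : ℕ) (i j : ℤ) : Equiv.Perm ℤ :=
  if h : (r : ℤ) ∣ (j - i) then 1 else Function.Involutive.toPerm _ (tFun_invol r i j h)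

/-- The set of Coxeter generators `s_1, …, s_r` of `W_r`. -/
def sGen (r : ℕ) : Set (Equiv.Perm ℤ) :=
  {w | ∃ i : ℤ, 1 ≤ i ∧ i ≤ (r : ℤ) ∧ w = tPerm r i (i + 1)}

/-- The affine Weyl group `W_r`, generated by `s_1, …, s_r`. -/
def WGrp (r : ℕ) : Subgroup (Equiv.Perm ℤ) := Subgroup.closure (sGen r)

/-- Length of an element of `W_r`: the minimal length of an expression
as a product of the generators `s_1, …, s_r`. -/
def lenW (r : ℕ) (x : Equiv.Perm ℤ) : ℕ :=
  sInf {m | ∃ l : List (Equiv.Perm ℤ), l.length = m ∧ (∀ s ∈ l, s ∈ sGen r) ∧ l.prod = x}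

/-- The shift permutation `ρ : j ↦ j + 1`. -/
def rhoP : Equiv.Perm ℤ := Equiv.addRight 1

/-- For `w = ρ^a x` with `x ∈ W_r`, recovers the exponent `a`. -/
def shiftIdx (r : ℕ) (w : Equiv.Perm ℤ) : ℤ :=
  (∑ i ∈ Finset.Icc (1 : ℤ) (r : ℤ), (w i - i)) / r

/-- Length on `𝔖_{Δ,r}`: writing `w = ρ^a x` with `x ∈ W_r`, `ℓ(w) = ℓ(x)`. -/
def alen (r : ℕ) (w : Equiv.Perm ℤ) : ℕ :=
  lenW r ((rhoP ^ shiftIdx r w)⁻¹ * w)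

/-- The set `T` of affine reflections `(i,j)`, `i < j`, `i ≢ j (mod r)`. -/
def TSet (r : ℕ) : Set (Equiv.Perm ℤ) :=
  {t | ∃ i j : ℤ, i < j ∧ ¬ (r : ℤ) ∣ (j - i) ∧ t = tPerm r i j}

/-- Bruhat order on `W_r`: `y ≤ w` iff `w = t_1 ⋯ t_m y` with all `t_i ∈ T` and
`ℓ(t_i ⋯ t_m y) > ℓ(t_{i+1} ⋯ t_m y)` for all `i`. -/
def bruhatLE (r : ℕ) (y w : Equiv.Perm ℤ) : Prop :=
  ∃ l : List (Equiv.Perm ℤ), (∀ t ∈ l, t ∈ TSet r) ∧ w = l.prod * y ∧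
    ∀ k, k < l.length →
      lenW r ((l.drop (k + 1)).prod * y) < lenW r ((l.drop k).prod * y)

/-- Bruhat order extended to `𝔖_{Δ,r}`: `ρ^a y ≤ ρ^b w` iff `a = b` and `y ≤ w`. -/
def abruhatLE (r : ℕ) (y w : Equiv.Perm ℤ) : Prop :=
  shiftIdx r y = shiftIdx r w ∧
    bruhatLE r ((rhoP ^ shiftIdx r y)⁻¹ * y) ((rhoP ^ shiftIdx r w)⁻¹ * w)

/-- `Λ_Δ(n,r)`: `n`-periodic sequences of naturals summing to `r` over a period. -/
def LambdaSet (n r : ℕ) : Set (ℤ → ℕ) :=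
  {lam | (∀ i : ℤ, lam i = lam (i - n)) ∧ ∑ i ∈ Finset.Icc (1 : ℤ) (n : ℤ), lam i = r}

/-- The interval `R^λ_m ⊆ ℤ`; for `m = i + kn` with `1 ≤ i ≤ n` this is
`{λ_{k,i-1}+1, …, λ_{k,i-1}+λ_i}` where `λ_{k,i-1} = kr + λ_1 + ⋯ + λ_{i-1}`. -/
def Rset (n r : ℕ) (lam : ℤ → ℕ) (m : ℤ) : Set ℤ :=
  {a | ((m - 1) / n) * r + ∑ t ∈ Finset.Icc (1 : ℤ) ((m - 1) % n), (lam t : ℤ) < a ∧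
       a ≤ ((m - 1) / n) * r + ∑ t ∈ Finset.Icc (1 : ℤ) ((m - 1) % n + 1), (lam t : ℤ)}

/-- The finite symmetric group `𝔖_r ⊆ W_r`, generated by `s_1, …, s_{r-1}`. -/
def SymFin (r : ℕ) : Subgroup (Equiv.Perm ℤ) :=
  Subgroup.closure {w | ∃ i : ℤ, 1 ≤ i ∧ i < (r : ℤ) ∧ w = tPerm r i (i + 1)}

/-- The Young subgroup `𝔖_λ`: elements of `𝔖_r` stabilizing each `R^λ_i`, `1 ≤ i ≤ n`. -/
def YoungSet (n r : ℕ) (lam : ℤ → ℕ) : Set (Equiv.Perm ℤ) :=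
  {w | w ∈ SymFin r ∧ ∀ i : ℤ, 1 ≤ i → i ≤ (n : ℤ) → w '' Rset n r lam i = Rset n r lam i}

/-- `D^Δ_λ`: distinguished right coset representatives. -/
def DRep (n r : ℕ) (lam : ℤ → ℕ) : Set (Equiv.Perm ℤ) :=
  {d | d ∈ AffSym r ∧ ∀ w ∈ YoungSet n r lam, alen r (w * d) = alen r w + alen r d}

/-- `D^Δ_{λ,μ} = D^Δ_λ ∩ (D^Δ_μ)⁻¹`. -/
def DRep2 (n r : ℕ) (lam mu : ℤ → ℕ) : Set (Equiv.Perm ℤ) :=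
  {d | d ∈ DRep n r lam ∧ d⁻¹ ∈ DRep n r mu}

/-- The matrix `J_Δ(λ,d,μ) = (|R^λ_k ∩ d(R^μ_l)|)_{k,l}`. -/
def JMat (n r : ℕ) (lam mu : ℤ → ℕ) (d : Equiv.Perm ℤ) : ℤ → ℤ → ℕ :=
  fun k l => (Rset n r lam k ∩ (d '' Rset n r mu l)).ncard

/-- `Θ_Δ(n)`: ℕ-matrices, `n`-periodic along the diagonal, with finite rows and columns. -/
def ThetaSet (n : ℕ) : Set (ℤ → ℤ → ℕ) :=
  {A | (∀ i j : ℤ, A (i + n) (j + n) = A i j) ∧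
       (∀ i : ℤ, {j : ℤ | A i j ≠ 0}.Finite) ∧
       (∀ j : ℤ, {i : ℤ | A i j ≠ 0}.Finite)}

/-- `σ(A) = Σ_{1 ≤ i ≤ n, j ∈ ℤ} a_{i,j}`. -/
def sigmaTot (n : ℕ) (A : ℤ → ℤ → ℕ) : ℕ :=
  ∑ᶠ j : ℤ, ∑ i ∈ Finset.Icc (1 : ℤ) (n : ℤ), A i j

/-- Row sums. -/
def roM (A : ℤ → ℤ → ℕ) : ℤ → ℕ := fun i => ∑ᶠ j : ℤ, A i j

/-- Column sums. -/
def coM (A : ℤ → ℤ → ℕ) : ℤ → ℕ := fun j => ∑ᶠ i : ℤ, A i j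

/-- `σ_{i,j}(A)`: for `i < j` the sum `Σ_{s ≤ i, t ≥ j} a_{s,t}`; for `i > j` the
sum `Σ_{s ≥ i, t ≤ j} a_{s,t}`. -/
def sigmaOrd (A : ℤ → ℤ → ℕ) (i j : ℤ) : ℕ :=
  if i < j then ∑ᶠ (p : ℤ × ℤ) (_ : p.1 ≤ i ∧ j ≤ p.2), A p.1 p.2
  else ∑ᶠ (p : ℤ × ℤ) (_ : i ≤ p.1 ∧ p.2 ≤ j), A p.1 p.2

/-- The map `η_m : A ↦ (a_{i, mn+j})_{i,j}`. -/
def etaM (n : ℕ) (m : ℤ) (A : ℤ → ℤ → ℕ) : ℤ → ℤ → ℕ := fun i j => A i (m * n + j)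

/-- The double coset `𝔖_λ d 𝔖_μ`. -/
def DCoset (n r : ℕ) (lam mu : ℤ → ℕ) (d : Equiv.Perm ℤ) : Set (Equiv.Perm ℤ) :=
  {w | ∃ u ∈ YoungSet n r lam, ∃ v ∈ YoungSet n r mu, w = u * d * v}

/-- `d_A = Σ a_{i,j} a_{k,l}` over `1 ≤ i ≤ n`, `k ≤ i`, `j < l`. -/
def dWt (n : ℕ) (A : ℤ → ℤ → ℕ) : ℕ :=
  ∑ᶠ (q : (ℤ × ℤ) × ℤ × ℤ)
    (_ : 1 ≤ q.1.1 ∧ q.1.1 ≤ (n : ℤ) ∧ q.2.1 ≤ q.1.1 ∧ q.1.2 < q.2.2),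
    A q.1.1 q.1.2 * A q.2.1 q.2.2

/-- The embedding `A ↦ Ã` from `Θ_Δ(n)` to `Θ_Δ(N)`. -/
def tildeM (n N : ℕ) (A : ℤ → ℤ → ℕ) : ℤ → ℤ → ℕ := fun k l =>
  let k0 : ℤ := (k - 1) % N + 1
  let l' : ℤ := l - ((k - 1) / N) * N
  let l0 : ℤ := (l' - 1) % N + 1
  let m : ℤ := (l' - 1) / N
  if k0 ≤ n ∧ l0 ≤ n then A k0 (l0 + m * n) else 0

/-- `Θ̃_Δ(n)`: ℤ-matrices with nonnegative off-diagonal entries, `n`-periodic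
along the diagonal, with finite rows and columns. -/
def ThetaTSet (n : ℕ) : Set (ℤ → ℤ → ℤ) :=
  {A | (∀ i j : ℤ, i ≠ j → 0 ≤ A i j) ∧ (∀ i j : ℤ, A (i + n) (j + n) = A i j) ∧
       (∀ i : ℤ, {j : ℤ | A i j ≠ 0}.Finite) ∧ (∀ j : ℤ, {i : ℤ | A i j ≠ 0}.Finite)}

/-- Row sums (ℤ-entry version). -/
def roMZ (A : ℤ → ℤ → ℤ) : ℤ → ℤ := fun i => ∑ᶠ j : ℤ, A i j

/-- Column sums (ℤ-entry version). -/
def coMZ (A : ℤ → ℤ → ℤ) : ℤ → ℤ := fun j => ∑ᶠ i : ℤ, A i j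

/-- `σ_{i,j}` (ℤ-entry version). -/
def sigmaOrdZ (A : ℤ → ℤ → ℤ) (i j : ℤ) : ℤ :=
  if i < j then ∑ᶠ (p : ℤ × ℤ) (_ : p.1 ≤ i ∧ j ≤ p.2), A p.1 p.2
  else ∑ᶠ (p : ℤ × ℤ) (_ : i ≤ p.1 ∧ p.2 ≤ j), A p.1 p.2

/-- The relation `B ⊑ A` on `Θ̃_Δ(n)`. -/
def sqLE (B A : ℤ → ℤ → ℤ) : Prop :=
  (∀ i j : ℤ, i ≠ j → sigmaOrdZ B i j ≤ sigmaOrdZ A i j) ∧ roMZ B = roMZ A ∧ coMZ B = coMZ A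

/-- The vector `v_a ∈ V = 𝔽[ε,ε⁻¹]^r`: for `a = i + kr` with `1 ≤ i ≤ r`,
`v_a = ε^{-k} v_i` where `v_1, …, v_r` is the standard basis. -/
def vb (F : Type*) [Field F] (r : ℕ) (a : ℤ) : Fin r → LaurentPolynomial F :=
  if h : 0 < r then
    Pi.single ⟨((a - 1) % (r : ℤ)).toNat, by
      have h1 : (0 : ℤ) < (r : ℤ) := by exact_mod_cast h
      have h2 : 0 ≤ (a - 1) % (r : ℤ) := Int.emod_nonneg _ (by omega)
      have h3 : (a - 1) % (r : ℤ) < (r : ℤ) := Int.emod_lt_of_pos _ h1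
      omega⟩
      (LaurentPolynomial.T (-((a - 1) / (r : ℤ))))
  else 0

/-- The bound `Σ_{1 ≤ j ≤ i} λ_j + kr` for `m = i + kn`, `1 ≤ i ≤ n`. -/
def bnd (n r : ℕ) (lam : ℤ → ℕ) (m : ℤ) : ℤ :=
  ((m - 1) / n) * r + ∑ t ∈ Finset.Icc (1 : ℤ) ((m - 1) % n + 1), (lam t : ℤ)

/-- The lattice-filtration subspace `L_m = span_𝔽{v_a | a ≤ Σ_{1≤j≤i} λ_j + kr}`. -/
def Lsub (F : Type*) [Field F] (n r : ℕ) (lam : ℤ → ℕ) (m : ℤ) :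
    Submodule F (Fin r → LaurentPolynomial F) :=
  Submodule.span F {x | ∃ a : ℤ, a ≤ bnd n r lam m ∧ x = vb F r a}

/-- The subspace `L'_m = span_𝔽{v_{d(a)} | a ≤ Σ_{1≤j≤i} μ_j + kr}`. -/
def Lsub' (F : Type*) [Field F] (n r : ℕ) (mu : ℤ → ℕ) (d : Equiv.Perm ℤ) (m : ℤ) :
    Submodule F (Fin r → LaurentPolynomial F) :=
  Submodule.span F {x | ∃ a : ℤ, a ≤ bnd n r mu m ∧ x = vb F r (d a)}
end

/-!
For `i < j`, `σ_{i,j}(J_Δ(λ,d,μ))` counts the positions `k > bnd μ (j-1)` with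
`d k ≤ bnd λ i`, and symmetrically for `i > j`; row and column sums of `J_Δ(λ,d,μ)` are the sizes
of the intervals `R^λ_k`, `R^μ_l`, whatever `d` is. After removing the common power of `ρ`,
`y ≤ d` is a chain of reflections `t = (a,b)` with `ℓ(t w) > ℓ(w)`. By the strong exchange
condition such a step has `w⁻¹ a < w⁻¹ b`, and then `t w` moves at least as many positions
across any pair of cuts as `w` does: each position lost is matched, by the translation by
`w⁻¹ b - w⁻¹ a`, with a position gained.
-/

open Set
open scoped Function

namespace AffSym

variable {r : ℕ} {w : Equiv.Perm ℤ}

theorem apply_add_mul (hw : w ∈ AffSym r) (x m : ℤ) : w (x + m * r) = w x + m * r := by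
  induction m using Int.induction_on with
  | zero => simp
  | succ k ih => rw [show x + (k + 1) * r = x + k * r + r by ring, hw, ih]; ring
  | pred k ih =>
    have h := hw (x + (-k - 1) * r)
    rw [show x + (-k - 1) * r + r = x + -k * r by ring, ih] at h
    linarith

theorem apply_eq_of_dvd (hw : w ∈ AffSym r) {x y : ℤ} (h : (r : ℤ) ∣ x - y) :
    w x = w y + (x - y) := by
  obtain ⟨m, hm⟩ := h
  rw [show x = y + m * r by linarith, apply_add_mul hw]
  ring

theorem dvd_apply_sub_apply_iff (hw : w ∈ AffSym r) {x y : ℤ} :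
    (r : ℤ) ∣ w x - w y ↔ (r : ℤ) ∣ x - y := by
  refine ⟨fun h => ?_, fun h => by rwa [apply_eq_of_dvd hw h, add_sub_cancel_left]⟩
  have h' := apply_eq_of_dvd (inv_mem hw) h
  simp only [Equiv.Perm.coe_inv, Equiv.symm_apply_apply] at h'
  rwa [show x - y = w x - w y by omega]

theorem exists_abs_apply_sub_le (hr : 1 ≤ r) (hw : w ∈ AffSym r) :
    ∃ C, ∀ x, |w x - x| ≤ C := by
  refine ⟨∑ i ∈ Finset.Ico 0 (r : ℤ), |w i - i|, fun x => ?_⟩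
  have hr' : (0 : ℤ) < r := by exact_mod_cast hr
  have hx : w x - x = w (x % r) - x % r := by
    conv_lhs => rw [← Int.emod_add_mul_ediv x r, mul_comm, apply_add_mul hw]
    ring
  rw [hx]
  refine Finset.single_le_sum (f := fun i => |w i - i|) (fun i _ => abs_nonneg _) ?_
  exact Finset.mem_Ico.2 ⟨Int.emod_nonneg _ hr'.ne', Int.emod_lt_of_pos _ hr'⟩

end AffSym

theorem rhoP_zpow_apply (m k : ℤ) : (rhoP ^ m) k = k + m := by
  induction m using Int.induction_on generalizing k with
  | zero => simp
  | succ m ih =>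
    rw [zpow_add_one, Equiv.Perm.mul_apply, ih]
    simp only [rhoP, Equiv.coe_addRight]
    ring
  | pred m ih =>
    rw [zpow_sub_one, Equiv.Perm.mul_apply, ih]
    simp only [rhoP, Equiv.Perm.inv_def, Equiv.addRight_symm, Equiv.coe_addRight]
    ring

theorem rhoP_zpow_mem_AffSym {r : ℕ} (m : ℤ) : rhoP ^ m ∈ AffSym r := fun i => by
  simp only [rhoP_zpow_apply]
  ring

section Reflections

variable {r : ℕ} {a b k : ℤ}

theorem tPerm_of_dvd (h : (r : ℤ) ∣ b - a) : tPerm r a b = 1 := dif_pos h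

theorem tPerm_apply_of_dvd_left (hab : ¬ (r : ℤ) ∣ b - a) (h : (r : ℤ) ∣ k - a) :
    tPerm r a b k = b + (k - a) := by
  simp only [tPerm, dif_neg hab, Function.Involutive.coe_toPerm, tFun, if_pos h]

theorem tPerm_apply_of_dvd_right (hab : ¬ (r : ℤ) ∣ b - a) (h : (r : ℤ) ∣ k - b) :
    tPerm r a b k = a + (k - b) := by
  have ha : ¬ (r : ℤ) ∣ k - a := fun ha => hab (by simpa using ha.sub h)
  simp only [tPerm, dif_neg hab, Function.Involutive.coe_toPerm, tFun, if_neg ha, if_pos h]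

theorem tPerm_apply_of_not_dvd (ha : ¬ (r : ℤ) ∣ k - a) (hb : ¬ (r : ℤ) ∣ k - b) :
    tPerm r a b k = k := by
  by_cases hab : (r : ℤ) ∣ b - a
  · rw [tPerm_of_dvd hab, Equiv.Perm.one_apply]
  · simp only [tPerm, dif_neg hab, Function.Involutive.coe_toPerm, tFun, if_neg ha, if_neg hb]

theorem tPerm_mem (a b : ℤ) : tPerm r a b ∈ AffSym r := by
  by_cases hab : (r : ℤ) ∣ b - a
  · rw [tPerm_of_dvd hab]
    exact one_mem _
  intro k
  have shift : ∀ x, (r : ℤ) ∣ k + r - x ↔ (r : ℤ) ∣ k - x := fun x => by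
    rw [show k + r - x = k - x + r by ring, dvd_add_left (dvd_refl _)]
  by_cases ha : (r : ℤ) ∣ k - a
  · rw [tPerm_apply_of_dvd_left hab ha, tPerm_apply_of_dvd_left hab ((shift a).2 ha)]; ring
  by_cases hb : (r : ℤ) ∣ k - b
  · rw [tPerm_apply_of_dvd_right hab hb, tPerm_apply_of_dvd_right hab ((shift b).2 hb)]; ring
  rw [tPerm_apply_of_not_dvd ha hb, tPerm_apply_of_not_dvd (mt (shift a).1 ha) (mt (shift b).1 hb)]

theorem tPerm_inv (a b : ℤ) : (tPerm r a b)⁻¹ = tPerm r a b := by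
  unfold tPerm
  split
  · exact inv_one
  · rfl

theorem tPerm_mul_self (a b : ℤ) : tPerm r a b * tPerm r a b = 1 := by
  nth_rewrite 1 [← tPerm_inv]
  exact inv_mul_cancel _

theorem conj_tPerm {g : Equiv.Perm ℤ} (hg : g ∈ AffSym r) (a b : ℤ) :
    g * tPerm r a b * g⁻¹ = tPerm r (g a) (g b) := by
  have hdvd := fun x y => AffSym.dvd_apply_sub_apply_iff (r := r) hg (x := x) (y := y)
  by_cases hab : (r : ℤ) ∣ b - a
  · rw [tPerm_of_dvd hab, tPerm_of_dvd ((hdvd b a).2 hab), mul_one, mul_inv_cancel]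
  have hab' : ¬ (r : ℤ) ∣ g b - g a := mt (hdvd b a).1 hab
  ext x
  obtain ⟨k, rfl⟩ := g.surjective x
  simp only [Equiv.Perm.mul_apply, Equiv.Perm.coe_inv, Equiv.symm_apply_apply]
  by_cases ha : (r : ℤ) ∣ k - a
  · rw [tPerm_apply_of_dvd_left hab ha, tPerm_apply_of_dvd_left hab' ((hdvd k a).2 ha),
      AffSym.apply_eq_of_dvd hg (show (r : ℤ) ∣ b + (k - a) - b by simpa),
      AffSym.apply_eq_of_dvd hg ha]
    ring
  by_cases hb : (r : ℤ) ∣ k - b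
  · rw [tPerm_apply_of_dvd_right hab hb, tPerm_apply_of_dvd_right hab' ((hdvd k b).2 hb),
      AffSym.apply_eq_of_dvd hg (show (r : ℤ) ∣ a + (k - b) - a by simpa),
      AffSym.apply_eq_of_dvd hg hb]
    ring
  rw [tPerm_apply_of_not_dvd ha hb,
    tPerm_apply_of_not_dvd (mt (hdvd k a).1 ha) (mt (hdvd k b).1 hb)]

theorem tPerm_add_of_dvd {m : ℤ} (h : (r : ℤ) ∣ m) :
    tPerm r (a + m) (b + m) = tPerm r a b := by
  have hconj := conj_tPerm (rhoP_zpow_mem_AffSym (r := r) m) a b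
  rw [rhoP_zpow_apply, rhoP_zpow_apply] at hconj
  rw [← hconj]
  ext x
  simp only [Equiv.Perm.mul_apply, ← zpow_neg, rhoP_zpow_apply]
  rw [AffSym.apply_eq_of_dvd (tPerm_mem a b) (show (r : ℤ) ∣ x + -m - x by simpa using h)]
  ring

end Reflections

section Generators

variable {r : ℕ} {a b c x : ℤ}

theorem tPerm_succ_mem_sGen (hr : 1 ≤ r) (a : ℤ) : tPerm r a (a + 1) ∈ sGen r := by
  have hr' : (0 : ℤ) < r := by exact_mod_cast hr
  have hdiv := Int.emod_add_mul_ediv (a - 1) r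
  have h0 := Int.emod_nonneg (a - 1) hr'.ne'
  have h1 := Int.emod_lt_of_pos (a - 1) hr'
  refine ⟨(a - 1) % r + 1, by omega, by omega, ?_⟩
  rw [← tPerm_add_of_dvd (a := (a - 1) % r + 1) (b := (a - 1) % r + 1 + 1)
    (show (r : ℤ) ∣ a - ((a - 1) % r + 1) from ⟨(a - 1) / r, by linarith⟩)]
  congr 1 <;> ring

theorem tPerm_succ_apply_mem_Icc (r : ℕ) (c x : ℤ) : tPerm r c (c + 1) x ∈ Icc (x - 1) (x + 1) := by
  by_cases hdeg : (r : ℤ) ∣ c + 1 - c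
  · rw [tPerm_of_dvd hdeg]
    simp
  by_cases h : (r : ℤ) ∣ x - c
  · rw [tPerm_apply_of_dvd_left hdeg h]
    constructor <;> linarith
  by_cases h' : (r : ℤ) ∣ x - (c + 1)
  · rw [tPerm_apply_of_dvd_right hdeg h']
    constructor <;> linarith
  rw [tPerm_apply_of_not_dvd h h']
  constructor <;> linarith

theorem tPerm_succ_apply_eq_add_one_iff (hr : ¬ (r : ℤ) ∣ 1) :
    tPerm r c (c + 1) x = x + 1 ↔ (r : ℤ) ∣ x - c := by
  have hdeg : ¬ (r : ℤ) ∣ c + 1 - c := by rwa [add_sub_cancel_left]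
  refine ⟨fun hx => ?_, fun h => by rw [tPerm_apply_of_dvd_left hdeg h]; ring⟩
  by_contra h
  by_cases h' : (r : ℤ) ∣ x - (c + 1)
  · rw [tPerm_apply_of_dvd_right hdeg h'] at hx
    omega
  · rw [tPerm_apply_of_not_dvd h h'] at hx
    omega

theorem tPerm_eq_of_apply_lt_apply {s : Equiv.Perm ℤ} (hs : s ∈ sGen r) (hab : a < b)
    (hnd : ¬ (r : ℤ) ∣ b - a) (h : s b < s a) : tPerm r a b = s := by
  obtain ⟨c, -, -, rfl⟩ := hs
  have ha := (tPerm_succ_apply_mem_Icc r c a).2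
  have hb := (tPerm_succ_apply_mem_Icc r c b).1
  obtain rfl : b = a + 1 := by omega
  have hsa : tPerm r c (c + 1) a = a + 1 := by
    have := (tPerm_succ_apply_mem_Icc r c (a + 1)).1
    omega
  have hca := (tPerm_succ_apply_eq_add_one_iff fun h1 => hnd (h1.trans (one_dvd _))).1 hsa
  rw [← tPerm_add_of_dvd (a := c) (b := c + 1) hca]
  congr 1 <;> ring

end Generators

section Length

variable {r : ℕ} {a b : ℤ} {w : Equiv.Perm ℤ}

theorem tPerm_mem_closure_sGen (hr : 1 ≤ r) (hab : a < b) (hnd : ¬ (r : ℤ) ∣ b - a) :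
    tPerm r a b ∈ Submonoid.closure (sGen r) := by
  obtain ⟨n, hn⟩ : ∃ n, (b - a).toNat = n := ⟨_, rfl⟩
  induction n using Nat.strong_induction_on generalizing a b with
  | _ n ih =>
  have hs := tPerm_succ_mem_sGen hr a
  by_cases hb : b = a + 1
  · subst hb
    exact Submonoid.subset_closure hs
  have h1 : ¬ (r : ℤ) ∣ 1 := fun h1 => hnd (h1.trans (one_dvd _))
  have hsa := (tPerm_succ_apply_eq_add_one_iff (c := a) (x := a) h1).2 (by simp)
  have hsb := mt (tPerm_succ_apply_eq_add_one_iff (c := a) (x := b) h1).1 hnd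
  have hsb' := tPerm_succ_apply_mem_Icc r a b
  have hnd' := mt (AffSym.dvd_apply_sub_apply_iff (tPerm_mem (r := r) a (a + 1))).1 hnd
  have hconj : tPerm r a b = tPerm r a (a + 1) *
      tPerm r (tPerm r a (a + 1) a) (tPerm r a (a + 1) b) * tPerm r a (a + 1) := by
    rw [← conj_tPerm (tPerm_mem _ _), tPerm_inv]
    simp only [mul_assoc, tPerm_mul_self, mul_one]
    rw [← mul_assoc, tPerm_mul_self, one_mul]
  have hne := (tPerm r a (a + 1)).injective.ne hab.ne
  -- conjugating by `s = (a, a+1)` raises `a` by one and does not raise `b`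
  rw [hconj]
  generalize tPerm r a (a + 1) = s at *
  rw [mem_Icc] at hsb'
  have hlt : s a < s b := by omega
  exact mul_mem (mul_mem (Submonoid.subset_closure hs) (ih _ (by omega) hlt hnd' rfl))
    (Submonoid.subset_closure hs)

theorem lenW_le_length {l : List (Equiv.Perm ℤ)} (hl : ∀ s ∈ l, s ∈ sGen r) :
    lenW r l.prod ≤ l.length :=
  Nat.sInf_le ⟨l, rfl, hl, rfl⟩

theorem exists_list_length_eq_lenW (hw : w ∈ Submonoid.closure (sGen r)) :
    ∃ l : List (Equiv.Perm ℤ), (∀ s ∈ l, s ∈ sGen r) ∧ l.prod = w ∧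
      l.length = lenW r w := by
  obtain ⟨l, hl, rfl⟩ := Submonoid.exists_list_of_mem_closure hw
  have hne : {m | ∃ l' : List (Equiv.Perm ℤ), l'.length = m ∧ (∀ s ∈ l', s ∈ sGen r) ∧
      l'.prod = l.prod}.Nonempty := ⟨_, l, rfl, hl, rfl⟩
  obtain ⟨l', h1, h2, h3⟩ := Nat.sInf_mem hne
  exact ⟨l', h2, h3, h1⟩

/-- Off the monoid generated by `sGen r`, `lenW r` takes the junk value `sInf ∅ = 0`. -/
theorem mem_closure_sGen_of_lenW_pos (h : 0 < lenW r w) : w ∈ Submonoid.closure (sGen r) := by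
  by_contra hw
  have hempty : {m | ∃ l : List (Equiv.Perm ℤ), l.length = m ∧ (∀ s ∈ l, s ∈ sGen r) ∧
      l.prod = w} = ∅ := by
    refine eq_empty_of_forall_notMem fun m ⟨l, _, hl, hprod⟩ => hw ?_
    rw [← hprod]
    exact list_prod_mem fun s hs => Submonoid.subset_closure (hl s hs)
  simp [lenW, hempty] at h

/-- The strong exchange condition. -/
theorem exists_tPerm_mul_prod_eq_prod_eraseIdx {l : List (Equiv.Perm ℤ)}
    (hl : ∀ s ∈ l, s ∈ sGen r) (hab : a < b) (hnd : ¬ (r : ℤ) ∣ b - a)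
    (hinv : l.prod⁻¹ b < l.prod⁻¹ a) :
    ∃ i < l.length, tPerm r a b * l.prod = (l.eraseIdx i).prod := by
  induction l generalizing a b with
  | nil => simp at hinv; omega
  | cons s l ih =>
    have hs := hl s List.mem_cons_self
    obtain ⟨c, -, -, rfl⟩ := id hs
    rw [List.prod_cons, mul_inv_rev, tPerm_inv, Equiv.Perm.mul_apply,
      Equiv.Perm.mul_apply] at hinv
    by_cases hsba : tPerm r c (c + 1) b < tPerm r c (c + 1) a
    · refine ⟨0, by simp, ?_⟩
      rw [tPerm_eq_of_apply_lt_apply hs hab hnd hsba, List.prod_cons, ← mul_assoc,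
        tPerm_mul_self, one_mul, List.eraseIdx_cons_zero]
    have hlt := lt_of_le_of_ne (not_lt.1 hsba) ((tPerm r c (c + 1)).injective.ne hab.ne)
    have hnd' := mt (AffSym.dvd_apply_sub_apply_iff (tPerm_mem (r := r) c (c + 1))).1 hnd
    obtain ⟨i, hi, he⟩ := ih (fun s hs => hl s (List.mem_cons_of_mem _ hs)) hlt hnd' hinv
    refine ⟨i + 1, by simpa using hi, ?_⟩
    rw [List.eraseIdx_cons_succ, List.prod_cons, List.prod_cons, ← he,
      ← conj_tPerm (tPerm_mem _ _), tPerm_inv]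
    simp only [← mul_assoc, tPerm_mul_self, one_mul]

theorem lenW_tPerm_mul_lt (hw : w ∈ Submonoid.closure (sGen r)) (hab : a < b)
    (hnd : ¬ (r : ℤ) ∣ b - a) (hinv : w⁻¹ b < w⁻¹ a) :
    lenW r (tPerm r a b * w) < lenW r w := by
  obtain ⟨l, hl, rfl, hlen⟩ := exists_list_length_eq_lenW hw
  obtain ⟨i, hi, he⟩ := exists_tPerm_mul_prod_eq_prod_eraseIdx hl hab hnd hinv
  rw [he, ← hlen]
  calc lenW r (l.eraseIdx i).prod
      ≤ (l.eraseIdx i).length := lenW_le_length fun s hs => hl s (List.mem_of_mem_eraseIdx hs)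
    _ < l.length := by rw [List.length_eraseIdx_of_lt hi]; omega

theorem inv_lt_inv_of_lenW_lt (hr : 1 ≤ r) (hab : a < b) (hnd : ¬ (r : ℤ) ∣ b - a)
    (h : lenW r w < lenW r (tPerm r a b * w)) : w⁻¹ a < w⁻¹ b := by
  have htw : tPerm r a b * w ∈ Submonoid.closure (sGen r) :=
    mem_closure_sGen_of_lenW_pos (by omega)
  have hw : w ∈ Submonoid.closure (sGen r) := by
    have := mul_mem (tPerm_mem_closure_sGen hr hab hnd) htw
    rwa [← mul_assoc, tPerm_mul_self, one_mul] at this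
  refine lt_of_le_of_ne (not_lt.1 fun hinv => ?_) (w⁻¹.injective.ne hab.ne)
  exact (lenW_tPerm_mul_lt hw hab hnd hinv).not_gt h

theorem bruhatLE.le_of_forall {β : Type*} [Preorder β] (hr : 1 ≤ r) (F : Equiv.Perm ℤ → β)
    (hF : ∀ w ∈ AffSym r, ∀ a b, a < b → ¬ (r : ℤ) ∣ b - a → w⁻¹ a < w⁻¹ b →
      F w ≤ F (tPerm r a b * w))
    {y w : Equiv.Perm ℤ} (hy : y ∈ AffSym r) (h : bruhatLE r y w) : F y ≤ F w := by
  obtain ⟨l, hlT, rfl, hlen⟩ := h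
  induction l with
  | nil => simp
  | cons t l ih =>
    obtain ⟨a, b, hab, hnd, rfl⟩ := hlT t List.mem_cons_self
    have hlT' := fun x hx => hlT x (List.mem_cons_of_mem _ hx)
    have hl : l.prod ∈ AffSym r := list_prod_mem fun x hx => by
      obtain ⟨_, _, _, _, rfl⟩ := hlT' x hx
      exact tPerm_mem _ _
    have hstep := hlen 0 (by simp)
    simp only [List.drop_zero, List.prod_cons, mul_assoc] at hstep
    refine (ih hlT' fun k hk => by simpa using hlen (k + 1) (by simpa using hk)).trans ?_
    rw [List.prod_cons, mul_assoc]
    exact hF _ (mul_mem hl hy) a b hab hnd (inv_lt_inv_of_lenW_lt hr hab hnd hstep)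

end Length

section Crossings

variable {r : ℕ} {a b k M N : ℤ} {w : Equiv.Perm ℤ}

def crossDown (w : Equiv.Perm ℤ) (M N : ℤ) : Set ℤ := {k | N < k ∧ w k ≤ M}

def crossUp (w : Equiv.Perm ℤ) (M N : ℤ) : Set ℤ := {k | k ≤ N ∧ M < w k}

theorem crossDown_finite (hr : 1 ≤ r) (hw : w ∈ AffSym r) (M N : ℤ) :
    (crossDown w M N).Finite := by
  obtain ⟨C, hC⟩ := AffSym.exists_abs_apply_sub_le hr hw
  refine (finite_Ioc N (M + C)).subset fun k ⟨hk, hwk⟩ => ⟨hk, ?_⟩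
  have := (abs_le.1 (hC k)).1
  omega

theorem crossUp_finite (hr : 1 ≤ r) (hw : w ∈ AffSym r) (M N : ℤ) :
    (crossUp w M N).Finite := by
  obtain ⟨C, hC⟩ := AffSym.exists_abs_apply_sub_le hr hw
  refine (finite_Ioc (M - C) N).subset fun k ⟨hk, hwk⟩ => ⟨?_, hk⟩
  have := (abs_le.1 (hC k)).2
  omega

theorem crossDown_rhoP_zpow_mul (m : ℤ) :
    crossDown (rhoP ^ m * w) M N = crossDown w (M - m) N := by
  ext k
  simp only [crossDown, mem_ofPred_eq, Equiv.Perm.mul_apply, rhoP_zpow_apply]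
  omega

theorem crossUp_rhoP_zpow_mul (m : ℤ) :
    crossUp (rhoP ^ m * w) M N = crossUp w (M - m) N := by
  ext k
  simp only [crossUp, mem_ofPred_eq, Equiv.Perm.mul_apply, rhoP_zpow_apply]
  omega

theorem AffSym.apply_add_inv_sub_inv (hw : w ∈ AffSym r) (hk : (r : ℤ) ∣ k - w⁻¹ a) :
    w (k + (w⁻¹ b - w⁻¹ a)) = w k + (b - a) := by
  have hk' : (r : ℤ) ∣ k + (w⁻¹ b - w⁻¹ a) - w⁻¹ b := by convert hk using 1; ring
  rw [apply_eq_of_dvd hw hk', apply_eq_of_dvd hw hk]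
  simp only [Equiv.Perm.coe_inv, Equiv.apply_symm_apply]
  ring

theorem tPerm_mul_apply_of_dvd_left (hw : w ∈ AffSym r) (hnd : ¬ (r : ℤ) ∣ b - a)
    (hk : (r : ℤ) ∣ k - w⁻¹ a) : (tPerm r a b * w) k = w k + (b - a) := by
  have hwk := AffSym.apply_eq_of_dvd hw hk
  simp only [Equiv.Perm.coe_inv, Equiv.apply_symm_apply] at hwk
  rw [Equiv.Perm.mul_apply, tPerm_apply_of_dvd_left hnd (by rw [hwk]; simpa using hk), hwk]
  ring

theorem tPerm_mul_apply_of_dvd_right (hw : w ∈ AffSym r) (hnd : ¬ (r : ℤ) ∣ b - a)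
    (hk : (r : ℤ) ∣ k - w⁻¹ b) : (tPerm r a b * w) k = w k - (b - a) := by
  have hwk := AffSym.apply_eq_of_dvd hw hk
  simp only [Equiv.Perm.coe_inv, Equiv.apply_symm_apply] at hwk
  rw [Equiv.Perm.mul_apply, tPerm_apply_of_dvd_right hnd (by rw [hwk]; simpa using hk), hwk]
  ring

theorem tPerm_mul_apply_of_not_dvd (hw : w ∈ AffSym r) (ha : ¬ (r : ℤ) ∣ k - w⁻¹ a)
    (hb : ¬ (r : ℤ) ∣ k - w⁻¹ b) : (tPerm r a b * w) k = w k := by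
  have hdvd := fun x => (AffSym.dvd_apply_sub_apply_iff hw (x := k) (y := w⁻¹ x)).not
  simp only [Equiv.Perm.coe_inv, Equiv.apply_symm_apply] at hdvd
  simp only [Equiv.Perm.coe_inv] at ha hb
  rw [Equiv.Perm.mul_apply, tPerm_apply_of_not_dvd ((hdvd a).2 ha) ((hdvd b).2 hb)]

theorem Set.ncard_le_ncard_of_injOn_sdiff {α : Type*} {s t : Set α} (f : α → α)
    (hf : MapsTo f (s \ t) (t \ s)) (hinj : InjOn f (s \ t)) (hs : s.Finite) (ht : t.Finite) :
    s.ncard ≤ t.ncard :=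
  (ncard_le_ncard_iff_ncard_sdiff_le_ncard_sdiff hs ht).2
    (ncard_le_ncard_of_injOn f hf hinj ht.sdiff)

/-- A position lost by `crossDown` lies in the class of `w⁻¹ a`; shifting it by
`w⁻¹ b - w⁻¹ a` gives a position gained. -/
theorem ncard_crossDown_le_tPerm_mul (hr : 1 ≤ r) (hw : w ∈ AffSym r) (hab : a < b)
    (hnd : ¬ (r : ℤ) ∣ b - a) (hinv : w⁻¹ a < w⁻¹ b) (M N : ℤ) :
    (crossDown w M N).ncard ≤ (crossDown (tPerm r a b * w) M N).ncard := by
  refine ncard_le_ncard_of_injOn_sdiff (· + (w⁻¹ b - w⁻¹ a)) ?_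
    (add_left_injective _).injOn (crossDown_finite hr hw M N)
    (crossDown_finite hr (mul_mem (tPerm_mem a b) hw) M N)
  rintro k ⟨⟨hNk, hwk⟩, hk⟩
  dsimp only
  have hM : M < (tPerm r a b * w) k := not_le.1 fun h => hk ⟨hNk, h⟩
  have hp : (r : ℤ) ∣ k - w⁻¹ a := by
    by_contra hp
    by_cases hq : (r : ℤ) ∣ k - w⁻¹ b
    · rw [tPerm_mul_apply_of_dvd_right hw hnd hq] at hM
      omega
    · rw [tPerm_mul_apply_of_not_dvd hw hp hq] at hM
      omega
  have hq : (r : ℤ) ∣ k + (w⁻¹ b - w⁻¹ a) - w⁻¹ b := by convert hp using 1; ring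
  have hshift := AffSym.apply_add_inv_sub_inv (b := b) hw hp
  rw [tPerm_mul_apply_of_dvd_left hw hnd hp] at hM
  refine ⟨⟨by omega, ?_⟩, fun h => ?_⟩
  · rw [tPerm_mul_apply_of_dvd_right hw hnd hq, hshift]
    omega
  · have := h.2
    omega

/-- A position lost by `crossUp` lies in the class of `w⁻¹ b`; shifting it by
`w⁻¹ a - w⁻¹ b` gives a position gained. -/
theorem ncard_crossUp_le_tPerm_mul (hr : 1 ≤ r) (hw : w ∈ AffSym r) (hab : a < b)
    (hnd : ¬ (r : ℤ) ∣ b - a) (hinv : w⁻¹ a < w⁻¹ b) (M N : ℤ) :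
    (crossUp w M N).ncard ≤ (crossUp (tPerm r a b * w) M N).ncard := by
  refine ncard_le_ncard_of_injOn_sdiff (· - (w⁻¹ b - w⁻¹ a)) ?_
    sub_left_injective.injOn (crossUp_finite hr hw M N)
    (crossUp_finite hr (mul_mem (tPerm_mem a b) hw) M N)
  rintro k ⟨⟨hkN, hwk⟩, hk⟩
  dsimp only
  have hM : (tPerm r a b * w) k ≤ M := not_lt.1 fun h => hk ⟨hkN, h⟩
  have hq : (r : ℤ) ∣ k - w⁻¹ b := by
    by_contra hq
    by_cases hp : (r : ℤ) ∣ k - w⁻¹ a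
    · rw [tPerm_mul_apply_of_dvd_left hw hnd hp] at hM
      omega
    · rw [tPerm_mul_apply_of_not_dvd hw hp hq] at hM
      omega
  have hp : (r : ℤ) ∣ k - (w⁻¹ b - w⁻¹ a) - w⁻¹ a := by convert hq using 1; ring
  have hshift := AffSym.apply_add_inv_sub_inv (b := b) hw hp
  rw [sub_add_cancel] at hshift
  rw [tPerm_mul_apply_of_dvd_right hw hnd hq] at hM
  refine ⟨⟨by omega, ?_⟩, fun h => ?_⟩
  · rw [tPerm_mul_apply_of_dvd_left hw hnd hp]
    omega
  · have := h.2
    omega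

theorem ncard_cross_le_of_abruhatLE (hr : 1 ≤ r) {y d : Equiv.Perm ℤ} (hy : y ∈ AffSym r)
    (h : abruhatLE r y d) (M N : ℤ) :
    (crossDown y M N).ncard ≤ (crossDown d M N).ncard ∧
      (crossUp y M N).ncard ≤ (crossUp d M N).ncard := by
  obtain ⟨hs, hb⟩ := h
  rw [hs] at hb
  set s := shiftIdx r d
  have hy' : (rhoP ^ s)⁻¹ * y ∈ AffSym r := mul_mem (inv_mem (rhoP_zpow_mem_AffSym s)) hy
  have hdown : ∀ w, crossDown w M N = crossDown ((rhoP ^ s)⁻¹ * w) (M - s) N := fun w => by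
    rw [← zpow_neg, crossDown_rhoP_zpow_mul, sub_neg_eq_add, sub_add_cancel]
  have hup : ∀ w, crossUp w M N = crossUp ((rhoP ^ s)⁻¹ * w) (M - s) N := fun w => by
    rw [← zpow_neg, crossUp_rhoP_zpow_mul, sub_neg_eq_add, sub_add_cancel]
  rw [hdown y, hdown d, hup y, hup d]
  exact ⟨bruhatLE.le_of_forall hr (fun w => (crossDown w (M - s) N).ncard)
      (fun w hw a b hab hnd hinv => ncard_crossDown_le_tPerm_mul hr hw hab hnd hinv _ _) hy' hb,
    bruhatLE.le_of_forall hr (fun w => (crossUp w (M - s) N).ncard)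
      (fun w hw a b hab hnd hinv => ncard_crossUp_le_tPerm_mul hr hw hab hnd hinv _ _) hy' hb⟩

end Crossings

section Partition

variable {β : Type*} [LinearOrder β] {f : ℤ → β} {x : β} {i k : ℤ}

theorem le_iff_of_mem_Ioc_pred (hf : Monotone f) (hx : x ∈ Ioc (f (k - 1)) (f k)) :
    x ≤ f i ↔ k ≤ i :=
  ⟨fun h => not_lt.1 fun hik => (h.trans (hf (show i ≤ k - 1 by omega))).not_gt hx.1,
    fun h => hx.2.trans (hf h)⟩

theorem pairwise_disjoint_Ioc_pred (hf : Monotone f) :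
    Pairwise (Disjoint on fun k => Ioc (f (k - 1)) (f k)) := fun _ _ hkl =>
  disjoint_left.2 fun _ hk hl => hkl (le_antisymm ((le_iff_of_mem_Ioc_pred hf hk).1 hl.2)
    ((le_iff_of_mem_Ioc_pred hf hl).1 hk.2))

theorem exists_mem_Ioc_pred (hf : Monotone f) (hbot : ∀ x, ∃ k, f k < x)
    (htop : ∀ x, ∃ k, x ≤ f k) (x : β) : ∃ k, x ∈ Ioc (f (k - 1)) (f k) := by
  obtain ⟨k₀, hk₀⟩ := hbot x
  obtain ⟨k, hk, hmin⟩ := Int.exists_least_of_bdd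
    ⟨k₀, fun z hz => not_lt.1 fun h => (hz.trans (hf h.le)).not_gt hk₀⟩ (htop x)
  exact ⟨k, not_le.1 fun h => by have := hmin _ h; omega, hk⟩

end Partition

section Intervals

variable {n r : ℕ} {lam : ℤ → ℕ} {x i : ℤ}

theorem bnd_sub_one (hn : 1 ≤ n) (hsum : ∑ t ∈ Finset.Icc (1 : ℤ) n, lam t = r) (m : ℤ) :
    bnd n r lam (m - 1) =
      (m - 1) / n * r + ∑ t ∈ Finset.Icc (1 : ℤ) ((m - 1) % n), (lam t : ℤ) := by
  have hn' : (0 : ℤ) < n := by exact_mod_cast hn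
  have hsum' : ∑ t ∈ Finset.Icc (1 : ℤ) n, (lam t : ℤ) = r := by exact_mod_cast hsum
  have hqs := Int.emod_add_mul_ediv (m - 1) n
  have hs0 := Int.emod_nonneg (m - 1) hn'.ne'
  have hs1 := Int.emod_lt_of_pos (m - 1) hn'
  unfold bnd
  rcases hs0.eq_or_lt with hs | hs
  · obtain ⟨hq, hs'⟩ := (Int.ediv_emod_unique hn').2
      (show n - 1 + n * ((m - 1) / n - 1) = m - 1 - 1 ∧ 0 ≤ (n : ℤ) - 1 ∧ (n : ℤ) - 1 < n from
        ⟨by linarith, by omega, by omega⟩)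
    rw [hq, hs', sub_add_cancel, hsum', ← hs, Finset.Icc_eq_empty (by omega), Finset.sum_empty]
    ring
  · obtain ⟨hq, hs'⟩ := (Int.ediv_emod_unique hn').2
      (show (m - 1) % n - 1 + n * ((m - 1) / n) = m - 1 - 1 ∧ 0 ≤ (m - 1) % n - 1 ∧
        (m - 1) % n - 1 < n from ⟨by linarith, by omega, by omega⟩)
    rw [hq, hs', sub_add_cancel]

theorem Rset_eq_Ioc (hn : 1 ≤ n) (hsum : ∑ t ∈ Finset.Icc (1 : ℤ) n, lam t = r) (m : ℤ) :
    Rset n r lam m = Ioc (bnd n r lam (m - 1)) (bnd n r lam m) := by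
  ext a
  rw [bnd_sub_one hn hsum m]
  rfl

theorem bnd_add (hn : 1 ≤ n) (m : ℤ) : bnd n r lam (m + n) = bnd n r lam m + r := by
  have hn' : (n : ℤ) ≠ 0 := by exact_mod_cast (by omega : n ≠ 0)
  unfold bnd
  rw [show m + n - 1 = m - 1 + 1 * n by ring, Int.add_mul_ediv_right _ _ hn',
    Int.add_mul_emod_self_right]
  ring

theorem bnd_add_mul (hn : 1 ≤ n) (m k : ℤ) :
    bnd n r lam (m + k * n) = bnd n r lam m + k * r := by
  induction k using Int.induction_on with
  | zero => simp
  | succ k ih => rw [show m + (k + 1) * n = m + k * n + n by ring, bnd_add hn, ih]; ring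
  | pred k ih =>
    rw [show m + -k * n = m + (-k - 1) * n + n by ring, bnd_add hn] at ih
    linarith

theorem monotone_bnd (hn : 1 ≤ n) (hsum : ∑ t ∈ Finset.Icc (1 : ℤ) n, lam t = r) :
    Monotone (bnd n r lam) := monotone_int_of_le_succ fun m => by
  have h := bnd_sub_one hn hsum (m + 1)
  rw [add_sub_cancel_right] at h
  rw [h, bnd, add_sub_cancel_right]
  gcongr
  omega

theorem exists_mem_Rset (hn : 1 ≤ n) (hr : 1 ≤ r)
    (hsum : ∑ t ∈ Finset.Icc (1 : ℤ) n, lam t = r) (x : ℤ) : ∃ k, x ∈ Rset n r lam k := by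
  have hbig : ∀ K : ℤ, 0 ≤ K → K ≤ K * r := fun K hK =>
    le_mul_of_one_le_right hK (by exact_mod_cast hr)
  simp only [Rset_eq_Ioc hn hsum]
  refine exists_mem_Ioc_pred (monotone_bnd hn hsum) (fun x => ?_) (fun x => ?_) x
  · refine ⟨0 + -(|x - bnd n r lam 0| + 1) * n, ?_⟩
    rw [bnd_add_mul hn]
    have := hbig (|x - bnd n r lam 0| + 1) (by positivity)
    have := neg_abs_le (x - bnd n r lam 0)
    linarith
  · refine ⟨0 + |x - bnd n r lam 0| * n, ?_⟩
    rw [bnd_add_mul hn]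
    have := hbig |x - bnd n r lam 0| (abs_nonneg _)
    have := le_abs_self (x - bnd n r lam 0)
    linarith

theorem pairwise_disjoint_Rset (hn : 1 ≤ n) (hsum : ∑ t ∈ Finset.Icc (1 : ℤ) n, lam t = r) :
    Pairwise (Disjoint on Rset n r lam) := by
  rw [show Rset n r lam = _ from funext (Rset_eq_Ioc hn hsum)]
  exact pairwise_disjoint_Ioc_pred (monotone_bnd hn hsum)

theorem exists_le_and_mem_Rset_iff (hn : 1 ≤ n) (hr : 1 ≤ r)
    (hsum : ∑ t ∈ Finset.Icc (1 : ℤ) n, lam t = r) :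
    (∃ k, k ≤ i ∧ x ∈ Rset n r lam k) ↔ x ≤ bnd n r lam i := by
  obtain ⟨k, hk⟩ := exists_mem_Rset hn hr hsum x
  rw [Rset_eq_Ioc hn hsum] at hk
  refine ⟨fun ⟨l, hl, hx⟩ => ?_, fun h => ⟨k, ?_, by rwa [Rset_eq_Ioc hn hsum]⟩⟩
  · rw [Rset_eq_Ioc hn hsum] at hx
    exact (le_iff_of_mem_Ioc_pred (monotone_bnd hn hsum) hx).2 hl
  · exact (le_iff_of_mem_Ioc_pred (monotone_bnd hn hsum) hk).1 h

theorem exists_ge_and_mem_Rset_iff (hn : 1 ≤ n) (hr : 1 ≤ r)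
    (hsum : ∑ t ∈ Finset.Icc (1 : ℤ) n, lam t = r) :
    (∃ k, i ≤ k ∧ x ∈ Rset n r lam k) ↔ bnd n r lam (i - 1) < x := by
  obtain ⟨k, hk⟩ := exists_mem_Rset hn hr hsum x
  refine ⟨fun ⟨l, hl, hx⟩ => ?_, fun h => ⟨k, ?_, hk⟩⟩
  · rw [Rset_eq_Ioc hn hsum] at hx
    exact not_le.1 fun h => by
      have := (le_iff_of_mem_Ioc_pred (monotone_bnd hn hsum) hx).1 h
      omega
  · rw [Rset_eq_Ioc hn hsum] at hk
    exact not_lt.1 fun h' =>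
      h.not_ge ((le_iff_of_mem_Ioc_pred (monotone_bnd hn hsum) hk).2 (by omega))

theorem iUnion_Rset (hn : 1 ≤ n) (hr : 1 ≤ r)
    (hsum : ∑ t ∈ Finset.Icc (1 : ℤ) n, lam t = r) :
    ⋃ k, Rset n r lam k = univ :=
  eq_univ_of_forall fun x => mem_iUnion.2 (exists_mem_Rset hn hr hsum x)

end Intervals

theorem Set.ncard_iUnion_of_pairwise_disjoint {ι α : Type*} {s : ι → Set α}
    (hd : Pairwise (Disjoint on s)) (hfin : (⋃ i, s i).Finite) :
    (⋃ i, s i).ncard = ∑ᶠ i, (s i).ncard := by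
  have hsub : ∀ i, (s i).Finite := fun i => hfin.subset (subset_iUnion s i)
  set t := Function.support fun i => (s i).ncard
  have ht : t.Finite := by
    refine Finite.of_finite_image (f := s) (hfin.finite_subsets.subset ?_) fun i hi j _ hij => ?_
    · rintro _ ⟨i, -, rfl⟩
      exact subset_iUnion s i
    · by_contra hne
      obtain ⟨x, hx⟩ := nonempty_of_ncard_ne_zero hi
      exact disjoint_left.1 (hd hne) hx (hij ▸ hx)
  have hU : ⋃ i, s i = ⋃ i ∈ t, s i := by
    ext x
    simp only [mem_iUnion]
    exact ⟨fun ⟨i, hx⟩ => ⟨i, ((ncard_pos (hsub i)).2 ⟨x, hx⟩).ne', hx⟩,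
      fun ⟨i, _, hx⟩ => ⟨i, hx⟩⟩
  rw [hU, ht.ncard_biUnion (fun i _ => hsub i) (hd.set_pairwise t), finsum_mem_support]

theorem finsum_ncard_inter_eq_ncard {ι κ α : Type*} {A : ι → Set α} {B : κ → Set α}
    (hA : Pairwise (Disjoint on A)) (hB : Pairwise (Disjoint on B)) (P : ι → Prop)
    (Q : κ → Prop)
    (hfin : ({x | ∃ k, P k ∧ x ∈ A k} ∩ {x | ∃ l, Q l ∧ x ∈ B l}).Finite) :
    ∑ᶠ (p : ι × κ) (_ : P p.1 ∧ Q p.2), (A p.1 ∩ B p.2).ncard =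
      ({x | ∃ k, P k ∧ x ∈ A k} ∩ {x | ∃ l, Q l ∧ x ∈ B l}).ncard := by
  classical
  set C : ι × κ → Set α := fun p => if P p.1 ∧ Q p.2 then A p.1 ∩ B p.2 else ∅
  have hC : ∀ p : ι × κ, ∑ᶠ (_ : P p.1 ∧ Q p.2), (A p.1 ∩ B p.2).ncard = (C p).ncard :=
    fun p => by rw [finsum_eq_if]; split_ifs <;> simp [C, *]
  have hU : ⋃ p, C p = {x | ∃ k, P k ∧ x ∈ A k} ∩ {x | ∃ l, Q l ∧ x ∈ B l} := by
    ext x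
    simp only [C, mem_iUnion, mem_ite_empty_right, mem_inter_iff, mem_ofPred_eq, Prod.exists]
    exact ⟨fun ⟨k, l, ⟨hk, hl⟩, hxk, hxl⟩ => ⟨⟨k, hk, hxk⟩, l, hl, hxl⟩,
      fun ⟨⟨k, hk, hxk⟩, l, hl, hxl⟩ => ⟨k, l, ⟨hk, hl⟩, hxk, hxl⟩⟩
  have hdisj : Pairwise (Disjoint on C) := by
    rintro ⟨k, l⟩ ⟨k', l'⟩ hne
    simp only [Function.onFun, C]
    split_ifs
    · rcases eq_or_ne k k' with rfl | hk
      · exact (hB fun h => hne (by rw [h])).mono inter_subset_right inter_subset_right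
      · exact (hA hk).mono inter_subset_left inter_subset_left
    all_goals simp
  rw [finsum_congr hC, ← hU, ncard_iUnion_of_pairwise_disjoint hdisj (hU ▸ hfin)]

section JMatrix

variable {n r : ℕ} {lam mu : ℤ → ℕ} {d : Equiv.Perm ℤ} {i j : ℤ}

theorem pairwise_disjoint_image_Rset (hn : 1 ≤ n)
    (hsum : ∑ t ∈ Finset.Icc (1 : ℤ) n, mu t = r) :
    Pairwise (Disjoint on fun l => d '' Rset n r mu l) := fun _ _ hkl =>
  (disjoint_image_iff d.injective).2 (pairwise_disjoint_Rset hn hsum hkl)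

theorem sigmaOrd_JMat_of_lt (hn : 1 ≤ n) (hr : 1 ≤ r)
    (hlam : ∑ t ∈ Finset.Icc (1 : ℤ) n, lam t = r)
    (hmu : ∑ t ∈ Finset.Icc (1 : ℤ) n, mu t = r)
    (hd : d ∈ AffSym r) (hij : i < j) :
    sigmaOrd (JMat n r lam mu d) i j =
      (crossDown d (bnd n r lam i) (bnd n r mu (j - 1))).ncard := by
  have hset : {x | ∃ k, k ≤ i ∧ x ∈ Rset n r lam k} ∩
      {x | ∃ l, j ≤ l ∧ x ∈ d '' Rset n r mu l} =
      d '' crossDown d (bnd n r lam i) (bnd n r mu (j - 1)) := by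
    ext x
    obtain ⟨k, rfl⟩ := d.surjective x
    simp only [mem_inter_iff, mem_ofPred_eq, d.injective.mem_set_image, crossDown,
      exists_le_and_mem_Rset_iff hn hr hlam, exists_ge_and_mem_Rset_iff hn hr hmu]
    exact and_comm
  unfold sigmaOrd JMat
  rw [if_pos hij, ← ncard_image_of_injective _ d.injective, ← hset]
  exact finsum_ncard_inter_eq_ncard (pairwise_disjoint_Rset hn hlam)
    (pairwise_disjoint_image_Rset hn hmu) (· ≤ i) (j ≤ ·)
    (by rw [hset]; exact (crossDown_finite hr hd _ _).image d)

theorem sigmaOrd_JMat_of_gt (hn : 1 ≤ n) (hr : 1 ≤ r)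
    (hlam : ∑ t ∈ Finset.Icc (1 : ℤ) n, lam t = r)
    (hmu : ∑ t ∈ Finset.Icc (1 : ℤ) n, mu t = r)
    (hd : d ∈ AffSym r) (hij : j < i) :
    sigmaOrd (JMat n r lam mu d) i j =
      (crossUp d (bnd n r lam (i - 1)) (bnd n r mu j)).ncard := by
  have hset : {x | ∃ k, i ≤ k ∧ x ∈ Rset n r lam k} ∩
      {x | ∃ l, l ≤ j ∧ x ∈ d '' Rset n r mu l} =
      d '' crossUp d (bnd n r lam (i - 1)) (bnd n r mu j) := by
    ext x
    obtain ⟨k, rfl⟩ := d.surjective x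
    simp only [mem_inter_iff, mem_ofPred_eq, d.injective.mem_set_image, crossUp,
      exists_le_and_mem_Rset_iff hn hr hmu, exists_ge_and_mem_Rset_iff hn hr hlam]
    exact and_comm
  unfold sigmaOrd JMat
  rw [if_neg hij.not_gt, ← ncard_image_of_injective _ d.injective, ← hset]
  exact finsum_ncard_inter_eq_ncard (pairwise_disjoint_Rset hn hlam)
    (pairwise_disjoint_image_Rset hn hmu) (i ≤ ·) (· ≤ j)
    (by rw [hset]; exact (crossUp_finite hr hd _ _).image d)

theorem roM_JMat (hn : 1 ≤ n) (hr : 1 ≤ r) (hmu : ∑ t ∈ Finset.Icc (1 : ℤ) n, mu t = r)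
    (k : ℤ) : roM (JMat n r lam mu d) k = (Rset n r lam k).ncard := by
  have hU : ⋃ l, Rset n r lam k ∩ d '' Rset n r mu l = Rset n r lam k := by
    rw [← inter_iUnion, ← image_iUnion, iUnion_Rset hn hr hmu, image_univ_of_surjective
      d.surjective, inter_univ]
  unfold roM JMat
  rw [← ncard_iUnion_of_pairwise_disjoint (fun _ _ hl => (pairwise_disjoint_image_Rset hn hmu
    hl).mono inter_subset_right inter_subset_right) (by rw [hU]; exact finite_Ioc _ _), hU]

theorem coM_JMat (hn : 1 ≤ n) (hr : 1 ≤ r) (hlam : ∑ t ∈ Finset.Icc (1 : ℤ) n, lam t = r)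
    (l : ℤ) : coM (JMat n r lam mu d) l = (Rset n r mu l).ncard := by
  have hU : ⋃ k, Rset n r lam k ∩ d '' Rset n r mu l = d '' Rset n r mu l := by
    rw [← iUnion_inter, iUnion_Rset hn hr hlam, univ_inter]
  unfold coM JMat
  rw [← ncard_iUnion_of_pairwise_disjoint (fun _ _ hk => (pairwise_disjoint_Rset hn hlam
    hk).mono inter_subset_left inter_subset_left) (by rw [hU]; exact (finite_Ioc _ _).image d), hU,
    ncard_image_of_injective _ d.injective]

end JMatrix

/-- if `y, d ∈ D^Δ_{λ,μ}` with `y ≤ d` in the Bruhat order, then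
`B = J_Δ(λ,y,μ)` and `A = J_Δ(λ,d,μ)` satisfy `B ⊑ A`: all `σ_{i,j}(B) ≤ σ_{i,j}(A)`,
`ro(B) = ro(A)` and `co(B) = co(A)`. -/
theorem JMat_sq_le_of_bruhat_le (n r : ℕ) (hn : 1 ≤ n) (hr : 1 ≤ r)
    (lam mu : ℤ → ℕ) (hlam : lam ∈ LambdaSet n r) (hmu : mu ∈ LambdaSet n r)
    (y d : Equiv.Perm ℤ) (hy : y ∈ DRep2 n r lam mu) (hd : d ∈ DRep2 n r lam mu)
    (hle : abruhatLE r y d) :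
    (∀ i j : ℤ, i ≠ j →
      sigmaOrd (JMat n r lam mu y) i j ≤ sigmaOrd (JMat n r lam mu d) i j) ∧
    roM (JMat n r lam mu y) = roM (JMat n r lam mu d) ∧
    coM (JMat n r lam mu y) = coM (JMat n r lam mu d) := by
  have hcross := ncard_cross_le_of_abruhatLE hr hy.1.1 hle
  refine ⟨fun i j hij => ?_, funext fun k => ?_, funext fun l => ?_⟩
  · rcases hij.lt_or_gt with h | h
    · rw [sigmaOrd_JMat_of_lt hn hr hlam.2 hmu.2 hy.1.1 h,
        sigmaOrd_JMat_of_lt hn hr hlam.2 hmu.2 hd.1.1 h]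
      exact (hcross _ _).1
    · rw [sigmaOrd_JMat_of_gt hn hr hlam.2 hmu.2 hy.1.1 h,
        sigmaOrd_JMat_of_gt hn hr hlam.2 hmu.2 hd.1.1 h]
      exact (hcross _ _).2
  · rw [roM_JMat hn hr hmu.2, roM_JMat hn hr hmu.2]
  · rw [coM_JMat hn hr hlam.2, coM_JMat hn hr hlam.2]
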